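/- Let N ≥ 2 be even. There exists a constant M < ∞, depending only on N and max_i ‖aᵢ‖_{L∞}, with the following property: if u : ℝ × ℝⁿ → ℝ is a smooth global solution of the PDE ∂u/∂t = Δu + P(u) that is bounded on each slab [−T, T] × ℝⁿ (T > 0), then u is bounded from above on all of ℝ^{n+1} with sup_{ℝ^{n+1}} u ≤ M. -/

import Mathlib

/-! `v(t) = 2NB + 2 + 2 / (t - t₁)` is a supersolution of the equation on `t > t₁` that blows
up at `t₁`. If `u` exceeded `v + δ‖x‖²` at some point of time `t₀`, then, since `u` is bounded
above on `(t₁, t₀] × ℝⁿ`, the function `u - v - δ‖x‖²` would attain a positive maximum on a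
cylinder `[s, t₀] × closedBall 0 R` away from its parabolic boundary. There `∂ₜu ≥ v'` and
`Δu ≤ 2nδ`, and the equation, whose leading term `-u^N` dominates once `u ≥ 2NB + 2`, forces
`u ≤ v`, a contradiction. Letting `δ → 0` and taking `t₁ = t₀ - 1` gives `u ≤ 2NB + 4`. -/

open MeasureTheory Filter Topology
open scoped ENNReal

noncomputable section

/-- Euclidean space `ℝⁿ`. -/
abbrev Spc (n : ℕ) := EuclideanSpace ℝ (Fin n)

/-- The Laplacian in the spatial variables. -/
noncomputable def lap {n : ℕ} (f : Spc n → ℝ) (x : Spc n) : ℝ :=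
  ∑ i : Fin n, fderiv ℝ (fun y => fderiv ℝ f y (EuclideanSpace.single i 1)) x
    (EuclideanSpace.single i 1)

/-- The polynomial nonlinearity `P(f)(x) = -f(x)^N + ∑_{i<N} aᵢ(x) f(x)^i`. -/
noncomputable def Pfun {n N : ℕ} (a : Fin N → Spc n → ℝ) (f : Spc n → ℝ) (x : Spc n) : ℝ :=
  -(f x) ^ N + ∑ i : Fin N, a i x * f x ^ (i : ℕ)

/-- The time derivative `∂u/∂t`. -/
noncomputable def timeDeriv {n : ℕ} (u : ℝ × Spc n → ℝ) (t : ℝ) (x : Spc n) : ℝ :=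
  deriv (fun s => u (s, x)) t

/-- `u` is a global solution of `∂u/∂t = Δu + P(u)`. -/
def IsSol {n N : ℕ} (a : Fin N → Spc n → ℝ) (u : ℝ × Spc n → ℝ) : Prop :=
  ∀ t x, timeDeriv u t x = lap (fun y => u (t, y)) x + Pfun a (fun y => u (t, y)) x

/-- `w` is an equilibrium: `Δw + P(w) = 0`. -/
def IsEquilibrium {n N : ℕ} (a : Fin N → Spc n → ℝ) (w : Spc n → ℝ) : Prop :=
  ∀ x, lap w x + Pfun a w x = 0

/-- The energy density `|∂u/∂t|² + |Δu + P(u)|²`. -/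
noncomputable def energyDensity {n N : ℕ} (a : Fin N → Spc n → ℝ) (u : ℝ × Spc n → ℝ)
    (t : ℝ) (x : Spc n) : ℝ :=
  (timeDeriv u t x) ^ 2 + (lap (fun y => u (t, y)) x + Pfun a (fun y => u (t, y)) x) ^ 2

/-- The energy `E(u) = (1/2) ∫_ℝ ∫_{ℝⁿ} (|∂u/∂t|² + |Δu + P(u)|²) dx dt`, valued in `ℝ≥0∞`. -/
noncomputable def energy {n N : ℕ} (a : Fin N → Spc n → ℝ) (u : ℝ × Spc n → ℝ) : ℝ≥0∞ :=
  (1 / 2) * ∫⁻ t : ℝ, ∫⁻ x : Spc n, ENNReal.ofReal (energyDensity a u t x)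

/-- The action density `(1/2)|∇f|² + f^{N+1}/(N+1) - ∑_{i<N} aᵢ f^{i+1}/(i+1)`. -/
noncomputable def actionDensity {n N : ℕ} (a : Fin N → Spc n → ℝ) (f : Spc n → ℝ)
    (x : Spc n) : ℝ :=
  (1 / 2) * ‖gradient f x‖ ^ 2 + f x ^ (N + 1) / (N + 1)
    - ∑ i : Fin N, a i x * f x ^ ((i : ℕ) + 1) / ((i : ℕ) + 1)

/-- The action functional `A(f)`. -/
noncomputable def action {n N : ℕ} (a : Fin N → Spc n → ℝ) (f : Spc n → ℝ) : ℝ :=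
  ∫ x : Spc n, actionDensity a f x

/-- `f` has finite action. -/
def FiniteAction {n N : ℕ} (a : Fin N → Spc n → ℝ) (f : Spc n → ℝ) : Prop :=
  Integrable (actionDensity a f)

/-- The coefficients `aᵢ` are smooth, in `L¹ ∩ L∞`, with all derivatives of all orders
bounded. -/
def GoodCoeffs {n N : ℕ} (a : Fin N → Spc n → ℝ) : Prop :=
  ∀ i, ContDiff ℝ (⊤ : ℕ∞) (a i) ∧ Integrable (a i) ∧
    ∀ k : ℕ, ∃ C : ℝ, ∀ x, ‖iteratedFDeriv ℝ k (a i) x‖ ≤ C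

/-- `u`, `∂u/∂t` and the spatial derivatives of `u` up to order two are bounded by a
constant multiple of `(1+|x|)^{-(n+1)}`, uniformly for `t` in compact intervals. -/
def AdmissibleDecay {n : ℕ} (u : ℝ × Spc n → ℝ) : Prop :=
  ∀ T > (0 : ℝ), ∃ C : ℝ, ∀ t : ℝ, ∀ x : Spc n, |t| ≤ T →
    |u (t, x)| ≤ C * (1 + ‖x‖) ^ (-(n + 1 : ℝ)) ∧
    |timeDeriv u t x| ≤ C * (1 + ‖x‖) ^ (-(n + 1 : ℝ)) ∧
    ‖fderiv ℝ (fun y => u (t, y)) x‖ ≤ C * (1 + ‖x‖) ^ (-(n + 1 : ℝ)) ∧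
    ‖iteratedFDeriv ℝ 2 (fun y => u (t, y)) x‖ ≤ C * (1 + ‖x‖) ^ (-(n + 1 : ℝ))

open Set Metric

theorem IsLocalMax.deriv_deriv_nonpos {f : ℝ → ℝ} {a : ℝ} (hmax : IsLocalMax f a)
    (hf : ContinuousAt f a) : deriv (deriv f) a ≤ 0 := by
  -- otherwise the second-derivative test makes `a` also a local minimum, so `f` is locally constant
  by_contra! hpos
  have hconst : f =ᶠ[𝓝 a] fun _ => f a :=
    (hmax.and (isLocalMin_of_deriv_deriv_pos hpos hmax.deriv_eq_zero hf)).mono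
      fun y hy => le_antisymm hy.1 hy.2
  have : deriv f =ᶠ[𝓝 a] fun _ => 0 := hconst.deriv.trans (by simp)
  simp [this.deriv_eq] at hpos

theorem IsMaxOn.hasDerivAt_nonneg_of_right_endpoint {f : ℝ → ℝ} {f' a b : ℝ}
    (hmax : IsMaxOn f (Icc a b) b) (hab : a < b) (hf : HasDerivAt f f' b) : 0 ≤ f' := by
  have hcone : a - b ∈ posTangentConeAt (Icc a b) b :=
    sub_mem_posTangentConeAt_of_segment_subset (by rw [segment_symm, segment_eq_Icc hab.le])
  have := hmax.localize.hasFDerivWithinAt_nonpos hf.hasDerivWithinAt hcone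
  simp only [ContinuousLinearMap.toSpanSingleton_apply, smul_eq_mul] at this
  nlinarith

theorem hasDerivAt_add_smul {E : Type*} [NormedAddCommGroup E] [NormedSpace ℝ E] (x e : E)
    (s : ℝ) : HasDerivAt (fun s : ℝ => x + s • e) e s := by
  simpa using ((hasDerivAt_id s).smul_const e).const_add x

theorem HasFDerivAt.hasDerivAt_comp_add_smul {E G : Type*} [NormedAddCommGroup E]
    [NormedSpace ℝ E] [NormedAddCommGroup G] [NormedSpace ℝ G] {g : E → G} {g' : E →L[ℝ] G}
    {x e : E} {s : ℝ} (hg : HasFDerivAt g g' (x + s • e)) :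
    HasDerivAt (fun s : ℝ => g (x + s • e)) (g' e) s :=
  hg.comp_hasDerivAt s (hasDerivAt_add_smul x e s)

theorem fderiv_fderiv_apply_le_of_isLocalMax_sub_sq {F : Type*} [NormedAddCommGroup F]
    [InnerProductSpace ℝ F] {f : F → ℝ} (hf : ContDiff ℝ 2 f) {δ : ℝ}
    {x : F} (hmax : IsLocalMax (fun y => f y - δ * ‖y‖ ^ 2) x) (e : F) :
    fderiv ℝ (fun y => fderiv ℝ f y e) x e ≤ 2 * δ * ‖e‖ ^ 2 := by
  set φ : ℝ → ℝ := fun s => f (x + s • e) - δ * ‖x + s • e‖ ^ 2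
  have hf₁ : Differentiable ℝ f := hf.differentiable (by norm_num)
  have hf₂ : Differentiable ℝ (fun y => fderiv ℝ f y e) :=
    ((hf.fderiv_right (m := 1) le_rfl).clm_apply contDiff_const).differentiable one_ne_zero
  have hφ' :
      deriv φ = fun s => fderiv ℝ f (x + s • e) e - δ * (2 * inner ℝ (x + s • e) e) := by
    funext s
    exact ((hf₁ _).hasFDerivAt.hasDerivAt_comp_add_smul.sub
      (((hasDerivAt_add_smul x e s).norm_sq).const_mul δ)).deriv
  have hφ'' : HasDerivAt (deriv φ)
      (fderiv ℝ (fun y => fderiv ℝ f y e) x e - δ * (2 * ‖e‖ ^ 2)) 0 := by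
    have hinner : HasDerivAt (fun s : ℝ => 2 * inner ℝ (x + s • e) e) (2 * ‖e‖ ^ 2) 0 := by
      simpa [real_inner_self_eq_norm_sq] using
        ((hasDerivAt_add_smul x e 0).inner ℝ (hasDerivAt_const (0 : ℝ) e)).const_mul 2
    rw [hφ']
    have h := (hf₂ (x + (0 : ℝ) • e)).hasFDerivAt.hasDerivAt_comp_add_smul.sub
      (hinner.const_mul δ)
    rwa [zero_smul, add_zero] at h
  have hφmax : IsLocalMax φ 0 :=
    IsLocalMax.comp_continuous (f := fun y => f y - δ * ‖y‖ ^ 2) (g := fun s : ℝ => x + s • e)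
      (b := 0) (by simpa using hmax) (hasDerivAt_add_smul x e 0).continuousAt
  have hφc : Continuous φ := by
    have := hf₁.continuous
    fun_prop
  have := hφmax.deriv_deriv_nonpos hφc.continuousAt
  rw [hφ''.deriv] at this
  linarith

theorem lap_le_of_isLocalMax_sub_sq {n : ℕ} {f : Spc n → ℝ} (hf : ContDiff ℝ 2 f) {δ : ℝ}
    {x : Spc n} (hmax : IsLocalMax (fun y => f y - δ * ‖y‖ ^ 2) x) : lap f x ≤ 2 * n * δ :=
  calc lap f x ≤ ∑ _i : Fin n, 2 * δ := Finset.sum_le_sum fun i _ => by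
        simpa using fderiv_fderiv_apply_le_of_isLocalMax_sub_sq hf hmax (EuclideanSpace.single i 1)
    _ = 2 * n * δ := by
      simp only [Finset.sum_const, Finset.card_univ, Fintype.card_fin, nsmul_eq_mul]
      ring

theorem Pfun_le_neg_sq_div_two_sub_self {n N : ℕ} (hN : 2 ≤ N) {a : Fin N → Spc n → ℝ}
    {f : Spc n → ℝ} {x : Spc n} {B : ℝ} (ha : ∀ i, |a i x| ≤ B) (hfx : 2 * N * B + 2 ≤ f x) :
    Pfun a f x ≤ -(f x ^ 2 / 2) - f x := by
  have hB : 0 ≤ B := (abs_nonneg _).trans (ha ⟨0, by omega⟩)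
  set s := f x
  have hs : 1 ≤ s := by nlinarith
  have hterm (i : Fin N) : a i x * s ^ (i : ℕ) ≤ B * s ^ (N - 1) :=
    calc a i x * s ^ (i : ℕ) ≤ B * s ^ (i : ℕ) :=
          mul_le_mul_of_nonneg_right ((le_abs_self _).trans (ha i)) (by positivity)
      _ ≤ B * s ^ (N - 1) :=
          mul_le_mul_of_nonneg_left (pow_le_pow_right₀ hs (by omega)) hB
  have hsum : ∑ i : Fin N, a i x * s ^ (i : ℕ) ≤ N * B * s ^ (N - 1) :=
    (Finset.sum_le_sum fun i _ => hterm i).trans_eq <| by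
      simp only [Finset.sum_const, Finset.card_univ, Fintype.card_fin, nsmul_eq_mul]
      ring
  have hsN : s ^ N = s * s ^ (N - 1) := by rw [← pow_succ', Nat.sub_add_cancel (by omega)]
  have hs₁ : s ≤ s ^ (N - 1) := by simpa using pow_le_pow_right₀ hs (by omega : 1 ≤ N - 1)
  have hs₂ : s ^ 2 ≤ s ^ N := pow_le_pow_right₀ hs hN
  have : Pfun a f x = -s ^ N + ∑ i : Fin N, a i x * s ^ (i : ℕ) := rfl
  nlinarith

theorem IsSol.deriv_le_of_isMaxOn {n N : ℕ} {a : Fin N → Spc n → ℝ} {u : ℝ × Spc n → ℝ}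
    (hsol : IsSol a u) (hu : ContDiff ℝ 2 u) {v : ℝ → ℝ} {v' s t δ : ℝ} {x : Spc n}
    (hv : HasDerivAt v v' t) (hst : s < t)
    (htime : IsMaxOn (fun τ => u (τ, x) - v τ) (Icc s t) t)
    (hspace : IsLocalMax (fun y => u (t, y) - δ * ‖y‖ ^ 2) x) :
    v' ≤ 2 * n * δ + Pfun a (fun y => u (t, y)) x := by
  have hut : HasDerivAt (fun τ => u (τ, x)) (timeDeriv u t x) t :=
    ((hu.differentiable two_ne_zero).comp (differentiable_id.prodMk (differentiable_const x))
      t).hasDerivAt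
  have htd := htime.hasDerivAt_nonneg_of_right_endpoint hst (hut.sub hv)
  have hlap : lap (fun y => u (t, y)) x ≤ 2 * n * δ :=
    lap_le_of_isLocalMax_sub_sq (hu.comp (contDiff_const.prodMk contDiff_id)) hspace
  linarith [hsol t x]

/-- `2 / (t - t₁)` solves `y' = -y² / 2` and blows up at `t₁`; the constant `2 N B + 2`
dominates the lower-order terms of `P`. -/
def upperBarrier (N : ℕ) (B t₁ t : ℝ) : ℝ := 2 * N * B + 2 + 2 / (t - t₁)

theorem hasDerivAt_upperBarrier (N : ℕ) (B : ℝ) {t₁ t : ℝ} (ht : t ≠ t₁) :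
    HasDerivAt (upperBarrier N B t₁) (-(2 / (t - t₁)) ^ 2 / 2) t := by
  have h := ((hasDerivAt_const t (2 : ℝ)).div ((hasDerivAt_id' t).sub_const t₁)
    (sub_ne_zero.2 ht)).const_add (2 * N * B + 2)
  exact h.congr_deriv (by field_simp; ring)

theorem IsSol.le_upperBarrier_of_isMaxOn {n N : ℕ} (hN : 2 ≤ N) {a : Fin N → Spc n → ℝ}
    {B : ℝ} (ha : ∀ i x, |a i x| ≤ B) {u : ℝ × Spc n → ℝ} (hsol : IsSol a u) (hu : ContDiff ℝ 2 u)
    {t₁ s t δ : ℝ} {x : Spc n} (ht₁ : t₁ < s) (hst : s < t) (hnδ : n * δ < 1)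
    (htime : IsMaxOn (fun τ => u (τ, x) - upperBarrier N B t₁ τ) (Icc s t) t)
    (hspace : IsLocalMax (fun y => u (t, y) - δ * ‖y‖ ^ 2) x) :
    u (t, x) ≤ upperBarrier N B t₁ t := by
  by_contra! hlt
  have hB : 0 ≤ B := (abs_nonneg _).trans (ha ⟨0, by omega⟩ x)
  have hpos : 0 < 2 / (t - t₁) := div_pos two_pos (by linarith)
  have hv := hsol.deriv_le_of_isMaxOn hu (hasDerivAt_upperBarrier N B (by linarith)) hst htime
    hspace
  have hP := Pfun_le_neg_sq_div_two_sub_self hN (ha · x) (f := fun y => u (t, y))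
    (by simp only [upperBarrier] at hlt; linarith)
  simp only [upperBarrier] at hlt
  have hsq : (2 / (t - t₁)) ^ 2 ≤ u (t, x) ^ 2 :=
    pow_le_pow_left₀ hpos.le (by nlinarith) 2
  nlinarith

theorem exists_mem_Ioo_le_div_sub {a b c : ℝ} (hc : 0 < c) (hab : a < b) (C : ℝ) :
    ∃ s ∈ Ioo a b, C ≤ c / (s - a) := by
  have hsub : Tendsto (fun s => s - a) (𝓝[>] a) (𝓝[>] 0) :=
    tendsto_nhdsWithin_of_tendsto_nhds_of_eventually_within _
      (by simpa using ((continuous_sub_right a).tendsto a).mono_left nhdsWithin_le_nhds)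
      (eventually_nhdsWithin_of_forall fun s hs => mem_Ioi.2 (sub_pos.2 hs))
  have hdiv := (tendsto_inv_nhdsGT_zero.comp hsub).const_mul_atTop hc
  obtain ⟨s, hsC, hs⟩ := ((hdiv.eventually_ge_atTop C).and (Ioo_mem_nhdsGT hab)).exists
  exact ⟨s, hs, by simpa [div_eq_mul_inv] using hsC⟩

theorem exists_isMaxOn_of_lt_on_parabolicBoundary {E : Type*} [NormedAddCommGroup E]
    [ProperSpace E] {g : ℝ × E → ℝ} {s t₀ R : ℝ} {x₀ : E} (hst : s ≤ t₀) (hx₀ : ‖x₀‖ ≤ R)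
    (hg : ContinuousOn g (Icc s t₀ ×ˢ closedBall 0 R))
    (hbdry : ∀ p ∈ Icc s t₀ ×ˢ closedBall 0 R, (p.1 = s ∨ ‖p.2‖ = R) → g p < g (t₀, x₀)) :
    ∃ t ∈ Ioc s t₀, ∃ x ∈ ball 0 R, IsMaxOn g (Icc s t₀ ×ˢ closedBall 0 R) (t, x) := by
  have hmem : (t₀, x₀) ∈ Icc s t₀ ×ˢ closedBall (0 : E) R :=
    ⟨⟨hst, le_rfl⟩, mem_closedBall_zero_iff.2 hx₀⟩
  obtain ⟨⟨t, x⟩, hK, hmax⟩ :=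
    (isCompact_Icc.prod (isCompact_closedBall 0 R)).exists_isMaxOn ⟨_, hmem⟩ hg
  have hge : g (t₀, x₀) ≤ g (t, x) := hmax hmem
  refine ⟨t, ⟨hK.1.1.lt_of_ne ?_, hK.1.2⟩, x,
    mem_ball_zero_iff.2 ((mem_closedBall_zero_iff.1 hK.2).lt_of_ne ?_), hmax⟩
  · rintro rfl
    exact (hbdry _ hK (Or.inl rfl)).not_ge hge
  · intro h
    exact (hbdry _ hK (Or.inr h)).not_ge hge

theorem IsSol.le_upperBarrier_add_sq {n N : ℕ} (hN : 2 ≤ N) {a : Fin N → Spc n → ℝ} {B : ℝ}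
    (ha : ∀ i x, |a i x| ≤ B) {u : ℝ × Spc n → ℝ} (hsol : IsSol a u) (hu : ContDiff ℝ 2 u)
    {t₁ t₀ C : ℝ} (ht : t₁ < t₀) (hC : ∀ t ∈ Ioc t₁ t₀, ∀ x, u (t, x) ≤ C) {δ : ℝ}
    (hδ : 0 < δ) (hnδ : n * δ < 1) (x₀ : Spc n) :
    u (t₀, x₀) ≤ upperBarrier N B t₁ t₀ + δ * ‖x₀‖ ^ 2 := by
  by_contra! hlt
  have hB : 0 ≤ B := (abs_nonneg _).trans (ha ⟨0, by omega⟩ x₀)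
  have hbarrier {t : ℝ} (ht : t₁ < t) : 2 / (t - t₁) ≤ upperBarrier N B t₁ t := by
    simp only [upperBarrier]
    nlinarith
  set g : ℝ × Spc n → ℝ := fun p => u p - upperBarrier N B t₁ p.1 - δ * ‖p.2‖ ^ 2
  have hg₀ : 0 < u (t₀, x₀) - upperBarrier N B t₁ t₀ - δ * ‖x₀‖ ^ 2 := by linarith
  -- `s` close to `t₁` and `R` large make `g` negative on the parabolic boundary, as `u ≤ C` there
  obtain ⟨s, ⟨hs₁, hs₀⟩, hsC⟩ := exists_mem_Ioo_le_div_sub two_pos ht C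
  obtain ⟨R, hR₀, hRC⟩ : ∃ R, ‖x₀‖ ≤ R ∧ C ≤ δ * R ^ 2 :=
    ((eventually_ge_atTop _).and
      (((tendsto_pow_atTop two_ne_zero).const_mul_atTop hδ).eventually_ge_atTop C)).exists
  have hg : ContinuousOn g (Icc s t₀ ×ˢ closedBall 0 R) := by
    refine (hu.continuous.continuousOn.sub (continuousOn_const.add
      (continuousOn_const.div (by fun_prop) ?_))).sub (by fun_prop)
    rintro p ⟨hp, -⟩
    exact (sub_pos.2 (hs₁.trans_le hp.1)).ne'
  obtain ⟨t, ⟨hst, ht₀⟩, x, hx, hmax⟩ :=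
    exists_isMaxOn_of_lt_on_parabolicBoundary hs₀.le hR₀ hg (by
      rintro ⟨τ, y⟩ ⟨hτ, -⟩ hbdry
      have huC := hC τ ⟨hs₁.trans_le hτ.1, hτ.2⟩ y
      rcases hbdry with hτs | hyR
      · simp only at hτs
        subst hτs
        have := hbarrier hs₁
        simp only [g]
        nlinarith [sq_nonneg ‖y‖]
      · simp only [g, hyR]
        have := hbarrier (t := τ) (hs₁.trans_le hτ.1)
        have := div_pos two_pos (sub_pos.2 (hs₁.trans_le hτ.1))
        linarith)
  have hK {τ y} (hτ : τ ∈ Icc s t) (hy : y ∈ ball (0 : Spc n) R) : g (τ, y) ≤ g (t, x) :=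
    hmax ⟨⟨hτ.1, hτ.2.trans ht₀⟩, ball_subset_closedBall hy⟩
  have htime : IsMaxOn (fun τ => u (τ, x) - upperBarrier N B t₁ τ) (Icc s t) t :=
    isMaxOn_iff.2 fun τ hτ => by
      have := hK hτ hx
      simp only [g] at this
      linarith
  have hspace : IsLocalMax (fun y => u (t, y) - δ * ‖y‖ ^ 2) x :=
    Filter.eventually_of_mem (isOpen_ball.mem_nhds hx) fun y hy => by
      have := hK ⟨hst.le, le_rfl⟩ hy
      simp only [g] at this
      linarith
  have hle := hsol.le_upperBarrier_of_isMaxOn hN ha hu hs₁ hst hnδ htime hspace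
  have hge : g (t₀, x₀) ≤ g (t, x) :=
    hmax ⟨⟨hs₀.le, le_rfl⟩, mem_closedBall_zero_iff.2 hR₀⟩
  simp only [g] at hge
  nlinarith [sq_nonneg ‖x‖]

theorem IsSol.le_upperBarrier {n N : ℕ} (hN : 2 ≤ N) {a : Fin N → Spc n → ℝ} {B : ℝ}
    (ha : ∀ i x, |a i x| ≤ B) {u : ℝ × Spc n → ℝ} (hsol : IsSol a u) (hu : ContDiff ℝ 2 u)
    {t₁ t₀ C : ℝ} (ht : t₁ < t₀) (hC : ∀ t ∈ Ioc t₁ t₀, ∀ x, u (t, x) ≤ C) (x₀ : Spc n) :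
    u (t₀, x₀) ≤ upperBarrier N B t₁ t₀ := by
  have hlim : Tendsto (fun δ : ℝ => upperBarrier N B t₁ t₀ + δ * ‖x₀‖ ^ 2) (𝓝[>] 0)
      (𝓝 (upperBarrier N B t₁ t₀)) := by
    have := ((continuous_mul_const (‖x₀‖ ^ 2)).const_add (upperBarrier N B t₁ t₀)).tendsto 0
    simpa using this.mono_left nhdsWithin_le_nhds
  have hsmall : ∀ᶠ δ : ℝ in 𝓝[>] 0, n * δ < 1 :=
    nhdsWithin_le_nhds <| ((continuous_const_mul (n : ℝ)).tendsto' 0 0 (mul_zero _)).eventually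
      (gt_mem_nhds one_pos)
  refine ge_of_tendsto hlim ?_
  filter_upwards [self_mem_nhdsWithin, hsmall] with δ hδ hnδ
  exact hsol.le_upperBarrier_add_sq hN ha hu ht hC hδ hnδ x₀

theorem even_degree_solutions_bounded_above_general
    {N : ℕ} (hN : 2 ≤ N) (B : ℝ) :
    ∃ M : ℝ, ∀ n : ℕ, 1 ≤ n →
      ∀ a : Fin N → Spc n → ℝ, GoodCoeffs a → (∀ i x, |a i x| ≤ B) →
      ∀ u : ℝ × Spc n → ℝ, ContDiff ℝ (⊤ : ℕ∞) u → IsSol a u →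
      (∀ T > (0 : ℝ), ∃ C : ℝ, ∀ (t : ℝ) (x : Spc n), |t| ≤ T → |u (t, x)| ≤ C) →
      ∀ p : ℝ × Spc n, u p ≤ M := by
  refine ⟨2 * N * B + 4, fun n _ a _ ha u hu hsol hslab ⟨t₀, x₀⟩ => ?_⟩
  obtain ⟨C, hC⟩ := hslab (|t₀| + 1) (by positivity)
  have hbound : ∀ t ∈ Ioc (t₀ - 1) t₀, ∀ x, u (t, x) ≤ C := fun t ht x =>
    (le_abs_self _).trans <| hC t x <| abs_le.2
      ⟨by linarith [neg_abs_le t₀, ht.1], by linarith [le_abs_self t₀, ht.2]⟩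
  have := hsol.le_upperBarrier hN ha (hu.of_le (WithTop.coe_le_coe.2 le_top)) (sub_one_lt t₀)
    hbound x₀
  norm_num [upperBarrier] at this
  linarith

/-- Let `N ≥ 2` be even. There is a constant `M`, depending only on `N`
and a bound `B` on `max_i ‖aᵢ‖_∞`, such that every smooth global solution of the PDE which
is bounded on each slab `[-T,T] × ℝⁿ` satisfies `u ≤ M` on all of `ℝ^{n+1}` (bounded from
above). -/
theorem even_degree_solutions_bounded_above
    {N : ℕ} (hN : 2 ≤ N) (heven : Even N) (B : ℝ) :
    ∃ M : ℝ, ∀ n : ℕ, 1 ≤ n →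
      ∀ a : Fin N → Spc n → ℝ, GoodCoeffs a → (∀ i x, |a i x| ≤ B) →
      ∀ u : ℝ × Spc n → ℝ, ContDiff ℝ (⊤ : ℕ∞) u → IsSol a u →
      (∀ T > (0 : ℝ), ∃ C : ℝ, ∀ (t : ℝ) (x : Spc n), |t| ≤ T → |u (t, x)| ≤ C) →
      ∀ p : ℝ × Spc n, u p ≤ M :=
  even_degree_solutions_bounded_above_general hN B
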